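/- Let q be a prime power, let K be a finite field with q elements, let L be a field extension of K of degree n, let d be a divisor of n, and let k ≥ 1. Then Σ_{β} ( Σ_{s | n} μ̂(n/s)·(q^s − 1)·δ[β^{(q^n−1)/(q^s−1)} = 1] )^k = Σ_{c | d} μ̂(d/c) · C_{n,k,c}(q), where the outer sum on the left is over all β ∈ Lˣ with [K(β) : K] = d, δ[P] is 1 if P holds and 0 otherwise, μ̂ is the Möbius function, and C_{n,k,c}(q) = Σ_{s_1,…,s_k | n} (q^n − 1) · ∏_{i=1}^{k} [ (q^{s_i} − 1) μ̂(n/s_i) ] / lcm( (q^n − 1)/(q^c − 1), q^{s_1} − 1, …, q^{s_k} − 1 ), the sum being over all k-tuples of divisors of n and the lcm computed in the integers. -/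

import Mathlib

/-!
For `β ∈ Lˣ`, `[K(β) : K] ∣ c` iff `β ^ (q ^ c - 1) = 1`, because the Frobenius `x ↦ x ^ q` has
order `[K(β) : K]` on `K(β)`. Möbius inversion over the divisors of `d` therefore turns the sum over
`β` of exact degree `d` into sums over the subgroups `{β | β ^ (q ^ c - 1) = 1}`. Expanding the
`k`-th power, each tuple `(s₁, …, sₖ)` contributes the number of `β` in the cyclic group `Lˣ` of
order `N = q ^ n - 1` with `β ^ (N / aᵢ) = 1` for all `i`, where `a₀ = N / (q ^ c - 1)` and
`aᵢ = q ^ sᵢ - 1`; these conditions say `β ^ (N / lcm aᵢ) = 1`, which has `N / lcm aᵢ` solutions.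
-/

/-- `C_{n,k,c}(q)`, where the sum ranges over all `k`-tuples of divisors of `n` and the lcm
is computed in the integers. -/
def Crat (n k c Q : ℕ) : ℚ :=
  ∑ s : Fin k → {x // x ∈ n.divisors},
    ((Q : ℚ) ^ n - 1) *
        (∏ i, (((Q : ℚ) ^ ((s i : ℕ)) - 1) *
          ((ArithmeticFunction.moebius (n / (s i : ℕ))) : ℚ))) /
      (((List.ofFn fun i => Q ^ ((s i : ℕ)) - 1).foldr Nat.lcm
          ((Q ^ n - 1) / (Q ^ c - 1)) : ℕ) : ℚ)

open Finset
open scoped IntermediateField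

theorem IsCyclic.card_pow_eq_one_of_dvd {G : Type*} [Group G] [Fintype G] [DecidableEq G]
    [IsCyclic G] {e : ℕ} (he : e ∣ Fintype.card G) : #{g : G | g ^ e = 1} = e := by
  rw [← sum_card_orderOf_eq_card_pow_eq_one (ne_zero_of_dvd_ne_zero Fintype.card_ne_zero he)]
  conv_rhs => rw [← Nat.sum_totient e]
  exact sum_congr rfl fun m hm =>
    IsCyclic.card_orderOf_eq_totient ((Nat.dvd_of_mem_divisors hm).trans he)

theorem pow_div_eq_one_iff_dvd_div_orderOf {M : Type*} [Monoid M] {x : M} {N a : ℕ}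
    (hx : x ^ N = 1) (ha : a ∣ N) : x ^ (N / a) = 1 ↔ a ∣ N / orderOf x := by
  rw [← orderOf_dvd_iff_pow_eq_one, Nat.dvd_div_iff_mul_dvd ha,
    Nat.dvd_div_iff_mul_dvd (orderOf_dvd_of_pow_eq_one hx), mul_comm]

theorem List.foldr_lcm_dvd_iff {l : List ℕ} {a m : ℕ} :
    l.foldr Nat.lcm a ∣ m ↔ a ∣ m ∧ ∀ t ∈ l, t ∣ m := by
  induction l with
  | nil => simp
  | cons t l ih => simp only [List.foldr_cons, Nat.lcm_dvd_iff, ih, List.forall_mem_cons]; tauto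

theorem pow_div_foldr_lcm_eq_one_iff {M : Type*} [Monoid M] {x : M} {N a : ℕ} {l : List ℕ}
    (hx : x ^ N = 1) (ha : a ∣ N) (hl : ∀ t ∈ l, t ∣ N) :
    x ^ (N / l.foldr Nat.lcm a) = 1 ↔ x ^ (N / a) = 1 ∧ ∀ t ∈ l, x ^ (N / t) = 1 := by
  rw [pow_div_eq_one_iff_dvd_div_orderOf hx (List.foldr_lcm_dvd_iff.2 ⟨ha, hl⟩),
    List.foldr_lcm_dvd_iff, pow_div_eq_one_iff_dvd_div_orderOf hx ha]
  exact and_congr_right' <| forall₂_congr fun t ht =>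
    (pow_div_eq_one_iff_dvd_div_orderOf hx (hl t ht)).symm

theorem IsCyclic.card_filter_pow_div_eq_one_and_forall {G : Type*} [Group G] [Fintype G]
    [DecidableEq G] [IsCyclic G] {N a : ℕ} {l : List ℕ} (hN : Fintype.card G = N) (ha : a ∣ N)
    (hl : ∀ t ∈ l, t ∣ N) :
    #{g : G | g ^ (N / a) = 1 ∧ ∀ t ∈ l, g ^ (N / t) = 1} = N / l.foldr Nat.lcm a := by
  subst hN
  rw [filter_congr fun g _ => (pow_div_foldr_lcm_eq_one_iff pow_card_eq_one ha hl).symm]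
  exact IsCyclic.card_pow_eq_one_of_dvd (Nat.div_dvd_of_dvd (List.foldr_lcm_dvd_iff.2 ⟨ha, hl⟩))

theorem FiniteField.card_units_filter_pow_eq_one {L : Type*} [Field L] [Fintype L] [DecidableEq L]
    {q n c k : ℕ} {s : Fin k → ℕ} (hL : Fintype.card L = q ^ n) (hc : c ∣ n) (hs : ∀ i, s i ∣ n) :
    #{β : Lˣ | β ^ (q ^ c - 1) = 1 ∧ ∀ i, β ^ ((q ^ n - 1) / (q ^ s i - 1)) = 1} =
      (q ^ n - 1) / (List.ofFn fun i => q ^ s i - 1).foldr Nat.lcm ((q ^ n - 1) / (q ^ c - 1)) := by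
  have hN : Fintype.card Lˣ = q ^ n - 1 := by rw [Fintype.card_units, hL]
  have hc' : q ^ c - 1 ∣ q ^ n - 1 := Nat.pow_sub_one_dvd_pow_sub_one _ hc
  have hcount := IsCyclic.card_filter_pow_div_eq_one_and_forall hN (Nat.div_dvd_of_dvd hc')
    (l := List.ofFn fun i => q ^ s i - 1)
    (by simpa using fun i => Nat.pow_sub_one_dvd_pow_sub_one q (hs i))
  simpa only [Nat.div_div_self hc' (hN ▸ Fintype.card_ne_zero), List.forall_mem_ofFn_iff]
    using hcount

theorem Units.pow_sub_one_eq_one_iff {M : Type*} [Monoid M] (u : Mˣ) {m : ℕ} (hm : m ≠ 0) :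
    u ^ (m - 1) = 1 ↔ (u : M) ^ m = u := by
  rw [← Units.val_pow_eq_pow_val, Units.val_inj, ← pow_sub_one_mul hm, mul_eq_right]

theorem pow_card_pow_eq_self_iff_finrank_adjoin_dvd {K L : Type*} [Field K] [Fintype K] [Field L]
    [Algebra K L] {x : L} (hx : IsIntegral K x) (c : ℕ) :
    x ^ Fintype.card K ^ c = x ↔ Module.finrank K K⟮x⟯ ∣ c := by
  have : FiniteDimensional K K⟮x⟯ := IntermediateField.adjoin.finiteDimensional hx
  have : Finite K⟮x⟯ := Module.finite_of_finite K
  rw [← FiniteField.orderOf_frobeniusAlgHom K K⟮x⟯, orderOf_dvd_iff_pow_eq_one]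
  have hfrob : ∀ y : K⟮x⟯, (FiniteField.frobeniusAlgHom K K⟮x⟯ ^ c) y = y ^ Fintype.card K ^ c :=
    fun y => by rw [AlgHom.coe_pow, FiniteField.coe_frobeniusAlgHom, pow_iterate]
  constructor
  · intro h
    refine IntermediateField.adjoin_algHom_ext K fun y (hy : y = x) => Subtype.ext ?_
    subst hy
    simpa [hfrob] using h
  · intro h
    simpa [hfrob] using
      congrArg Subtype.val (AlgHom.congr_fun h (IntermediateField.AdjoinSimple.gen K x))

theorem sum_ite_eq_sum_divisors_moebius_mul {α R : Type*} [Fintype α] [CommRing R] (deg : α → ℕ)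
    (f : α → R) {d : ℕ} (hd : 0 < d) :
    ∑ x, (if deg x = d then f x else 0) =
      ∑ c ∈ d.divisors, (ArithmeticFunction.moebius (d / c) : R) *
        ∑ x, if deg x ∣ c then f x else 0 := by
  have hsum : ∀ m > 0, ∑ e ∈ m.divisors, ∑ x, (if deg x = e then f x else 0) =
      ∑ x, if deg x ∣ m then f x else 0 := by
    intro m hm
    rw [sum_comm]
    refine sum_congr rfl fun x _ => ?_
    simp [Nat.mem_divisors, hm.ne']
  rw [← ArithmeticFunction.sum_eq_iff_sum_mul_moebius_eq.mp hsum d hd]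
  exact Nat.sum_divisorsAntidiagonal'
    (fun a c => (ArithmeticFunction.moebius a : R) * ∑ x, if deg x ∣ c then f x else 0)

theorem sum_ite_pow_sum_mul_boole {α ι R : Type*} [Fintype α] [CommSemiring R] (P : α → Prop)
    [DecidablePred P] (Q : ι → α → Prop) [∀ i, DecidablePred (Q i)] (s : Finset ι) (w : ι → R)
    (k : ℕ) :
    ∑ x, (if P x then (∑ i ∈ s, w i * if Q i x then 1 else 0) ^ k else 0) =
      ∑ p : Fin k → s, (∏ j, w (p j)) * #{x | P x ∧ ∀ j, Q (p j) x} := by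
  have hx : ∀ x, (if P x then (∑ i ∈ s, w i * if Q i x then 1 else 0) ^ k else 0) =
      ∑ p : Fin k → s, (∏ j, w (p j)) * if P x ∧ ∀ j, Q (p j) x then 1 else 0 := by
    intro x
    rw [← sum_coe_sort s, Fintype.sum_pow]
    by_cases hP : P x
    · refine (if_pos hP).trans (sum_congr rfl fun p _ => ?_)
      rw [prod_mul_distrib, prod_boole]
      simp only [hP, true_and, mem_univ, forall_const]
    · simp [hP]
  simp_rw [hx]
  rw [sum_comm]
  simp_rw [← mul_sum, sum_boole]

theorem character_sum_power_formula_general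
    (n d k : ℕ) (hd : d ∣ n)
    (K L : Type) [Field K] [Fintype K] [Field L] [Fintype L] [DecidableEq L]
    [Algebra K L] (hdim : Module.finrank K L = n) :
    (∑ β : Lˣ,
        if Module.finrank K (IntermediateField.adjoin K {(β : L)}) = d
        then (∑ s ∈ n.divisors,
            ((ArithmeticFunction.moebius (n / s)) : ℚ) * ((Fintype.card K : ℚ) ^ s - 1) *
              (if β ^ ((Fintype.card K ^ n - 1) / (Fintype.card K ^ s - 1)) = 1
                then 1 else 0)) ^ k
        else 0)
      = ∑ c ∈ d.divisors,
          ((ArithmeticFunction.moebius (d / c)) : ℚ) * Crat n k c (Fintype.card K) := by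
  set q := Fintype.card K
  have hn : 0 < n := hdim ▸ Module.finrank_pos
  have hL : Fintype.card L = q ^ n := hdim ▸ Module.card_eq_pow_finrank
  have hN0 : q ^ n - 1 ≠ 0 := by
    rw [← hL, ← Fintype.card_units]; exact Fintype.card_ne_zero
  rw [sum_ite_eq_sum_divisors_moebius_mul _ _ (Nat.pos_of_dvd_of_pos hd hn)]
  refine sum_congr rfl fun c hc => congrArg _ ?_
  have hcn : c ∣ n := (Nat.dvd_of_mem_divisors hc).trans hd
  have hdeg : ∀ β : Lˣ, Module.finrank K K⟮(β : L)⟯ ∣ c ↔ β ^ (q ^ c - 1) = 1 := fun β => by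
    rw [Units.pow_sub_one_eq_one_iff β (pow_ne_zero _ Fintype.card_ne_zero),
      pow_card_pow_eq_self_iff_finrank_adjoin_dvd (IsIntegral.of_finite K _)]
  simp_rw [hdeg]
  rw [sum_ite_pow_sum_mul_boole, Crat]
  refine sum_congr rfl fun p _ => ?_
  have hs : ∀ i, (p i : ℕ) ∣ n := fun i => Nat.dvd_of_mem_divisors (p i).2
  set D := (List.ofFn fun i => q ^ (p i : ℕ) - 1).foldr Nat.lcm ((q ^ n - 1) / (q ^ c - 1))
  have hD : D ∣ q ^ n - 1 := List.foldr_lcm_dvd_iff.2 ⟨Nat.div_dvd_of_dvd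
    (Nat.pow_sub_one_dvd_pow_sub_one _ hcn),
    by simpa using fun i => Nat.pow_sub_one_dvd_pow_sub_one q (hs i)⟩
  rw [FiniteField.card_units_filter_pow_eq_one hL hcn hs,
    Nat.cast_div hD (Nat.cast_ne_zero.2 (ne_zero_of_dvd_ne_zero hN0 hD)),
    Nat.cast_sub (Nat.one_le_pow _ _ Fintype.card_pos), Nat.cast_pow, Nat.cast_one]
  simp_rw [mul_comm ((q : ℚ) ^ _ - 1)]
  ring

/-- Corollary 4.8 of the paper (element-level form): for a finite field `K` with `q` elements,
a degree-`n` extension `L/K`, a divisor `d` of `n` and `k ≥ 1`,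
`Σ_β (Σ_{s∣n} μ̂(n/s)(q^s-1)δ[β^{(q^n-1)/(q^s-1)} = 1])^k = Σ_{c∣d} μ̂(d/c)·C_{n,k,c}(q)`,
the outer sum ranging over β ∈ Lˣ of degree `d` over `K`. -/
theorem character_sum_power_formula
    (n d k : ℕ) (hn : 1 ≤ n) (hk : 1 ≤ k) (hd : d ∣ n)
    (K L : Type) [Field K] [Fintype K] [Field L] [Fintype L] [DecidableEq L]
    [Algebra K L] (hdim : Module.finrank K L = n) :
    (∑ β : Lˣ,
        if Module.finrank K (IntermediateField.adjoin K {(β : L)}) = d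
        then (∑ s ∈ n.divisors,
            ((ArithmeticFunction.moebius (n / s)) : ℚ) * ((Fintype.card K : ℚ) ^ s - 1) *
              (if β ^ ((Fintype.card K ^ n - 1) / (Fintype.card K ^ s - 1)) = 1
                then 1 else 0)) ^ k
        else 0)
      = ∑ c ∈ d.divisors,
          ((ArithmeticFunction.moebius (d / c)) : ℚ) * Crat n k c (Fintype.card K) :=
  character_sum_power_formula_general n d k hd K L hdim
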